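/- The Knizhnik–Zamolodchikov connection ∇f = df − (1/(k+h^∨)) Σ_{p ≠ ℓ} (z_ℓ − z_p)^{-1} Ω_{ℓp} f dz_ℓ, where Ω_{ℓp} = Σ_i g^i_{(ℓ)} g_{i,(p)} is the Casimir element acting on the ℓ-th and p-th tensor factors, is flat; equivalently, the 1-form ω = Σ_{ℓ<p} Ω_{ℓp} d log(z_ℓ − z_p) satisfies dω = 0 and ω ∧ ω = 0, which follows from the infinitesimal braid (Kohno–Drinfeld) relations [Ω_{ℓp}, Ω_{ℓq} + Ω_{pq}] = 0 and [Ω_{ℓp}, Ω_{qr}] = 0 for distinct indices. -/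

import Mathlib

/-!
The connection form is `A_l = κ⁻¹ H_l` with `H_l = ∑_{q ≠ l} (z_l - z_q)⁻¹ Ω_{lq}` the Gaudin
Hamiltonians, so the curvature is `κ⁻¹ (∂_l H_p - ∂_p H_l) + κ⁻² [H_l, H_p]`. The first part
vanishes because `∂_l H_p = (z_p - z_l)⁻² Ω_{pl}` is symmetric in `l, p`. For the second, expand
`[H_l, H_p]` as a double sum over `q ≠ l`, `r ≠ p`: terms with four distinct indices vanish by the
second braid relation, the term `[Ω_{lp}, Ω_{pl}]` vanishes by symmetry, and the three remaining
terms attached to each third index `m` cancel by the first braid relation together with Arnold's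
identity `1/((z_l - z_m)(z_p - z_m)) - 1/((z_l - z_p)(z_p - z_m)) + 1/((z_l - z_p)(z_l - z_m)) = 0`.
-/

open Finset

/-- Endomorphisms of the representation space `V₁ ⊗ ... ⊗ Vₙ` (realized as
`Fin d → ℂ`). -/
abbrev EndC (d : ℕ) := (Fin d → ℂ) →L[ℂ] (Fin d → ℂ)

variable {ι : Type*}

def gaudinHamiltonian [Fintype ι] [DecidableEq ι] {K M : Type*} [Field K] [AddCommMonoid M]
    [Module K M] (Ω : ι → ι → M) (l : ι) (z : ι → K) : M :=
  ∑ q ∈ univ.erase l, (z l - z q)⁻¹ • Ω l q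

section Derivative

variable [Fintype ι] [DecidableEq ι] {𝕜 E : Type*} [NontriviallyNormedField 𝕜]
  [NormedAddCommGroup E] [NormedSpace 𝕜 E]

theorem hasFDerivAt_gaudinHamiltonian (Ω : ι → ι → E) (a : ι) {z : ι → 𝕜}
    (hz : Function.Injective z) :
    HasFDerivAt (gaudinHamiltonian Ω a)
      (∑ q ∈ univ.erase a, ContinuousLinearMap.smulRight (-((z a - z q) ^ 2)⁻¹ •
        (ContinuousLinearMap.proj (R := 𝕜) (φ := fun _ : ι => 𝕜) a
          - ContinuousLinearMap.proj q)) (Ω a q)) z := by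
  refine HasFDerivAt.fun_sum fun q hq => ?_
  have hne : z a - z q ≠ 0 := sub_ne_zero.2 (hz.ne (ne_of_mem_erase hq).symm)
  exact ((hasDerivAt_inv hne).comp_hasFDerivAt z
    ((hasFDerivAt_apply a z).sub (hasFDerivAt_apply q z))).smul_const (Ω a q)

theorem fderiv_gaudinHamiltonian_single (Ω : ι → ι → E) {a b : ι} (hab : a ≠ b) {z : ι → 𝕜}
    (hz : Function.Injective z) :
    fderiv 𝕜 (gaudinHamiltonian Ω a) z (Pi.single b 1) = ((z a - z b) ^ 2)⁻¹ • Ω a b := by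
  rw [(hasFDerivAt_gaudinHamiltonian Ω a hz).fderiv]
  simp [Pi.single_apply, hab]

theorem fderiv_gaudinHamiltonian_comm {Ω : ι → ι → E} (hsymm : ∀ l p, Ω l p = Ω p l)
    {z : ι → 𝕜} (hz : Function.Injective z) (l p : ι) :
    fderiv 𝕜 (gaudinHamiltonian Ω p) z (Pi.single l 1)
      = fderiv 𝕜 (gaudinHamiltonian Ω l) z (Pi.single p 1) := by
  rcases eq_or_ne l p with rfl | hlp
  · rfl
  rw [fderiv_gaudinHamiltonian_single Ω hlp.symm hz, fderiv_gaudinHamiltonian_single Ω hlp hz,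
    hsymm, ← neg_sub, neg_sq]

end Derivative

section Commute

variable {K L : Type*} [Field K] [LieRing L] [LieAlgebra K L] {Ω : ι → ι → L}

theorem casimir_arnold_relation (hsymm : ∀ l p, Ω l p = Ω p l)
    (hbraid₁ : ∀ l p q, l ≠ p → l ≠ q → p ≠ q → ⁅Ω l p, Ω l q + Ω p q⁆ = 0)
    {z : ι → K} (hz : Function.Injective z) {l p m : ι} (hlp : l ≠ p) (hml : m ≠ l)
    (hmp : m ≠ p) :
    (z p - z m)⁻¹ • (z l - z p)⁻¹ • ⁅Ω l p, Ω p m⁆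
      + (z p - z l)⁻¹ • (z l - z m)⁻¹ • ⁅Ω l m, Ω p l⁆
      + (z p - z m)⁻¹ • (z l - z m)⁻¹ • ⁅Ω l m, Ω p m⁆ = 0 := by
  have h₁ : ⁅Ω l m, Ω p l⁆ = -⁅Ω l m, Ω p m⁆ := by
    have := hbraid₁ l m p hml.symm hlp hmp
    rw [lie_add, hsymm m p, hsymm l p] at this
    exact eq_neg_of_add_eq_zero_left this
  have h₂ : ⁅Ω l p, Ω p m⁆ = -⁅Ω l m, Ω p m⁆ := by
    have := hbraid₁ p l m hlp.symm hmp.symm hml.symm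
    rw [lie_add] at this
    calc ⁅Ω l p, Ω p m⁆ = ⁅Ω p l, Ω p m⁆ := by rw [hsymm l p]
      _ = -⁅Ω p l, Ω l m⁆ := eq_neg_of_add_eq_zero_left this
      _ = ⁅Ω l m, Ω p l⁆ := lie_skew _ _
      _ = _ := h₁
  have hlp' : z l - z p ≠ 0 := sub_ne_zero.2 (hz.ne hlp)
  have hml' : z l - z m ≠ 0 := sub_ne_zero.2 (hz.ne hml.symm)
  have hmp' : z p - z m ≠ 0 := sub_ne_zero.2 (hz.ne hmp.symm)
  have arnold : (z l - z m)⁻¹ * (z p - z m)⁻¹ - (z l - z p)⁻¹ * (z p - z m)⁻¹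
      - (z l - z m)⁻¹ * (z p - z l)⁻¹ = 0 := by
    rw [← neg_sub (z l) (z p)]
    field_simp
    ring
  rw [h₁, h₂]
  linear_combination (norm := module) arnold • ⁅Ω l m, Ω p m⁆

theorem gaudinHamiltonian_lie_eq_zero [Fintype ι] [DecidableEq ι]
    (hsymm : ∀ l p, Ω l p = Ω p l)
    (hbraid₁ : ∀ l p q, l ≠ p → l ≠ q → p ≠ q → ⁅Ω l p, Ω l q + Ω p q⁆ = 0)
    (hbraid₂ : ∀ l p q r, l ≠ p → l ≠ q → l ≠ r → p ≠ q → p ≠ r → q ≠ r →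
      ⁅Ω l p, Ω q r⁆ = 0)
    {z : ι → K} (hz : Function.Injective z) (l p : ι) :
    ⁅gaudinHamiltonian Ω l z, gaudinHamiltonian Ω p z⁆ = 0 := by
  rcases eq_or_ne l p with rfl | hlp
  · exact lie_self _
  set f : ι → ι → L := fun q r => (z p - z r)⁻¹ • (z l - z q)⁻¹ • ⁅Ω l q, Ω p r⁆ with hf
  set S := (univ.erase l).erase p with hS
  have hmemS {m : ι} (hm : m ∈ S) : m ≠ l ∧ m ≠ p := by
    simp only [hS, mem_erase] at hm
    exact ⟨hm.2.1, hm.1⟩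
  have hpl : f p l = 0 := by simp only [hf, hsymm p l, lie_self, smul_zero]
  have hoff : ∀ q ∈ S, ∑ r ∈ S, f q r = f q q := fun q hq =>
    sum_eq_single_of_mem q hq fun r hr hrq => by
      simp only [hf, hbraid₂ l q p r (hmemS hq).1.symm hlp (hmemS hr).1.symm (hmemS hq).2
        hrq.symm (hmemS hr).2.symm, smul_zero]
  have hdiag : ∀ m ∈ S, f p m + f m l + f m m = 0 := fun m hm =>
    casimir_arnold_relation hsymm hbraid₁ hz hlp (hmemS hm).1 (hmemS hm).2
  have hrow : ∀ q, ∑ r ∈ univ.erase p, f q r = f q l + ∑ r ∈ S, f q r := fun q => by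
    rw [hS, erase_right_comm, add_sum_erase _ _ (mem_erase.2 ⟨hlp, mem_univ l⟩)]
  calc ⁅gaudinHamiltonian Ω l z, gaudinHamiltonian Ω p z⁆
      = ∑ q ∈ univ.erase l, ∑ r ∈ univ.erase p, f q r := by
        simp only [gaudinHamiltonian]
        rw [sum_lie]
        simp only [smul_lie, lie_sum, lie_smul]
        rfl
    _ = f p l + ∑ m ∈ S, (f p m + f m l + f m m) := by
        rw [← add_sum_erase _ _ (mem_erase.2 ⟨hlp.symm, mem_univ p⟩), hrow,
          sum_congr rfl fun q _ => hrow q, sum_add_distrib, sum_congr rfl hoff,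
          sum_add_distrib, sum_add_distrib]
        abel
    _ = 0 := by rw [hpl, sum_eq_zero hdiag, add_zero]

end Commute

theorem kz_connection_flat_general (n d : ℕ) (κ : ℂ)
    (Ω : Fin n → Fin n → EndC d)
    (hsymm : ∀ l p, Ω l p = Ω p l)
    (hbraid₁ : ∀ l p q, l ≠ p → l ≠ q → p ≠ q →
      ⁅Ω l p, Ω l q + Ω p q⁆ = 0)
    (hbraid₂ : ∀ l p q r, l ≠ p → l ≠ q → l ≠ r → p ≠ q → p ≠ r → q ≠ r →
      ⁅Ω l p, Ω q r⁆ = 0)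
    (A : Fin n → (Fin n → ℂ) → EndC d)
    (hA : ∀ (l : Fin n) (z : Fin n → ℂ),
      A l z = (1 / κ) • ∑ p ∈ univ \ {l}, (z l - z p)⁻¹ • Ω l p) :
    ∀ z : Fin n → ℂ, (∀ i j : Fin n, i ≠ j → z i ≠ z j) →
      ∀ l p : Fin n,
        fderiv ℂ (A p) z (Pi.single l 1) - fderiv ℂ (A l) z (Pi.single p 1)
          + ⁅A l z, A p z⁆ = 0 := by
  intro z hz l p
  have hinj : Function.Injective z := Function.injective_iff_pairwise_ne.2 fun i j => hz i j
  have hA' : ∀ l, A l = (1 / κ) • gaudinHamiltonian Ω l := fun l => funext fun w => by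
    rw [hA, sdiff_singleton_eq_erase]
    rfl
  -- `LieRing.ofAssociativeRing` is not a global instance; its bracket is the commutator.
  let _ : LieRing (EndC d) := LieRing.ofAssociativeRing
  rw [hA' l, hA' p, fderiv_const_smul_field (f := gaudinHamiltonian Ω p),
    fderiv_const_smul_field (f := gaudinHamiltonian Ω l)]
  simp only [Pi.smul_apply, smul_apply, fderiv_gaudinHamiltonian_comm hsymm hinj,
    sub_self, zero_add, smul_lie, lie_smul,
    gaudinHamiltonian_lie_eq_zero hsymm hbraid₁ hbraid₂ hinj, smul_zero]

/-- Flatness of the Knizhnik–Zamolodchikov connection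
`∇ f = df - (1/κ) ∑_{p ≠ ℓ} (z_ℓ - z_p)⁻¹ Ω_{ℓp} f dz_ℓ` (`κ = k + h^∨ ≠ 0`):
if the Casimir operators `Ω_{ℓp}` are symmetric in their indices and satisfy the
infinitesimal braid (Kohno–Drinfeld) relations `[Ω_{ℓp}, Ω_{ℓq} + Ω_{pq}] = 0`
and `[Ω_{ℓp}, Ω_{qr}] = 0` for distinct indices, then the curvature of `∇`
vanishes on the configuration space `{z : z_i ≠ z_j for i ≠ j}`. -/
theorem kz_connection_flat (n d : ℕ) (κ : ℂ) (hκ : κ ≠ 0)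
    (Ω : Fin n → Fin n → EndC d)
    (hsymm : ∀ l p, Ω l p = Ω p l)
    (hbraid₁ : ∀ l p q, l ≠ p → l ≠ q → p ≠ q →
      ⁅Ω l p, Ω l q + Ω p q⁆ = 0)
    (hbraid₂ : ∀ l p q r, l ≠ p → l ≠ q → l ≠ r → p ≠ q → p ≠ r → q ≠ r →
      ⁅Ω l p, Ω q r⁆ = 0)
    (A : Fin n → (Fin n → ℂ) → EndC d)
    (hA : ∀ (l : Fin n) (z : Fin n → ℂ),
      A l z = (1 / κ) • ∑ p ∈ univ \ {l}, (z l - z p)⁻¹ • Ω l p) :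
    ∀ z : Fin n → ℂ, (∀ i j : Fin n, i ≠ j → z i ≠ z j) →
      ∀ l p : Fin n,
        fderiv ℂ (A p) z (Pi.single l 1) - fderiv ℂ (A l) z (Pi.single p 1)
          + ⁅A l z, A p z⁆ = 0 :=
  kz_connection_flat_general n d κ Ω hsymm hbraid₁ hbraid₂ A hA
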